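/- Let G be a (banner, K_{2,3})-free graph, H an induced 5-cycle with vertices v1,...,v5, and Q a connected vertex set disjoint from and anticomplete to H. Then the set A5+ of vertices adjacent to all five vertices of H and having at least one neighbor in Q is a clique. -/

import Mathlib

open SimpleGraph

/-- The banner: a 4-cycle 0-1-2-3-0 with a pendant vertex 4 adjacent to 0. -/
def banner : SimpleGraph (Fin 5) :=
  SimpleGraph.fromRel (fun i j => (i, j) ∈ [((0 : Fin 5), 1), (1, 2), (2, 3), (3, 0), (0, 4)])

/-- The house: a 4-cycle 0-1-2-3-0 with a vertex 4 adjacent to 2 and 3. -/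
def house : SimpleGraph (Fin 5) :=
  SimpleGraph.fromRel (fun i j => (i, j) ∈ [((0 : Fin 5), 1), (1, 2), (2, 3), (3, 0), (2, 4), (3, 4)])

/-- The chordless 4-cycle. -/
def cycle4 : SimpleGraph (Fin 4) :=
  SimpleGraph.fromRel (fun i j => j = i + 1)

/-- The chordless 5-cycle. -/
def cycle5 : SimpleGraph (Fin 5) :=
  SimpleGraph.fromRel (fun i j => j = i + 1)

/-- The complete bipartite graph K_{2,3}. -/
def k23 : SimpleGraph (Fin 2 ⊕ Fin 3) := completeBipartiteGraph (Fin 2) (Fin 3)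

/-- `G` contains no induced copy of `F` (an embedding preserves both adjacency
and non-adjacency). -/
def Free {W : Type*} {V : Type*} (F : SimpleGraph W) (G : SimpleGraph V) : Prop :=
  IsEmpty (F ↪g G)

/-- `v 0, ..., v 4` form an induced (chordless) 5-cycle of `G`, edges `v i - v (i+1)`. -/
def IsInducedC5 {V : Type*} (G : SimpleGraph V) (v : Fin 5 → V) : Prop :=
  Function.Injective v ∧ ∀ i j, G.Adj (v i) (v j) ↔ (j = i + 1 ∨ i = j + 1)

/-- `v 0, ..., v 4` form an induced house in `G`: 4-cycle `v 0, v 1, v 2, v 3`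
(standing for v1,v2,v3,v4) plus `v 4` (standing for v5) adjacent to `v 1` and `v 2`. -/
def IsInducedHouse {V : Type*} (G : SimpleGraph V) (v : Fin 5 → V) : Prop :=
  Function.Injective v ∧ ∀ i j, G.Adj (v i) (v j) ↔
    ((i, j) ∈ [((0 : Fin 5), 1), (1, 2), (2, 3), (3, 0), (1, 4), (2, 4)] ∨
     (j, i) ∈ [((0 : Fin 5), 1), (1, 2), (2, 3), (3, 0), (1, 4), (2, 4)])

/-- `Q` is disjoint from and anticomplete to the five vertices `v 0, ..., v 4`. -/
def Anticomplete5 {V : Type*} (G : SimpleGraph V) (Q : Set V) (v : Fin 5 → V) : Prop :=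
  (∀ i, v i ∉ Q) ∧ ∀ q ∈ Q, ∀ i, ¬ G.Adj q (v i)

/-! Let `x, y` be non-adjacent vertices complete to the cycle, and let `q ∈ Q` be a neighbour
of `x`. Then `x, y` together with the non-adjacent cycle vertices `v 0, v 2` form an induced
4-cycle, and `q` has no neighbour on the cycle. If `q` is adjacent to `y`, the sides
`{x, y}` and `{v 0, v 2, q}` span an induced `K_{2,3}`; otherwise `q` is a pendant vertex at `x`
and we get an induced banner. -/

section

variable {V : Type*} {G : SimpleGraph V}

theorem Free.false_of_adj_iff {W : Type*} {F : SimpleGraph W} (h : _root_.Free F G) (f : W → V)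
    (hf : Function.Injective f) (hadj : ∀ i j, G.Adj (f i) (f j) ↔ F.Adj i j) : False :=
  h.false ⟨⟨f, hf⟩, hadj _ _⟩

theorem Free.banner_false (h : _root_.Free banner G) {x a y b q : V} (hab : a ≠ b)
    (hxa : G.Adj x a) (hay : G.Adj a y) (hyb : G.Adj y b) (hbx : G.Adj b x)
    (hnxy : ¬G.Adj x y) (hnab : ¬G.Adj a b)
    (hxq : G.Adj x q) (hnqa : ¬G.Adj q a) (hnqy : ¬G.Adj q y) (hnqb : ¬G.Adj q b) : False := by
  refine h.false_of_adj_iff ![x, a, y, b, q] ?_ ?_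
  · intro i j hij
    fin_cases i <;> fin_cases j <;> simp at hij ⊢ <;> subst hij <;>
      grind [SimpleGraph.adj_symm, SimpleGraph.irrefl]
  · intro i j
    fin_cases i <;> fin_cases j <;> simp [banner] <;> grind [SimpleGraph.adj_symm]

theorem Free.k23_false (h : _root_.Free k23 G) {x y a b c : V} (hxy : x ≠ y) (hnxy : ¬G.Adj x y)
    (hab : a ≠ b) (hac : a ≠ c) (hbc : b ≠ c)
    (hnab : ¬G.Adj a b) (hnac : ¬G.Adj a c) (hnbc : ¬G.Adj b c)
    (hxa : G.Adj x a) (hxb : G.Adj x b) (hxc : G.Adj x c)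
    (hya : G.Adj y a) (hyb : G.Adj y b) (hyc : G.Adj y c) : False := by
  refine h.false_of_adj_iff (Sum.elim ![x, y] ![a, b, c]) ?_ ?_
  · rintro (i | i) (j | j) hij <;> fin_cases i <;> fin_cases j <;> simp at hij ⊢ <;> subst hij <;>
      grind [SimpleGraph.adj_symm, SimpleGraph.irrefl]
  · rintro (i | i) (j | j) <;> fin_cases i <;> fin_cases j <;> simp [k23] <;>
      grind [SimpleGraph.adj_symm]

theorem SimpleGraph.adj_of_mem_commonNeighbors (hban : _root_.Free banner G)
    (hk23 : _root_.Free k23 G) {a b x y q : V} (hab : a ≠ b) (hnab : ¬G.Adj a b)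
    (hx : x ∈ G.commonNeighbors a b) (hy : y ∈ G.commonNeighbors a b) (hxy : x ≠ y)
    (hxq : G.Adj x q) (hqa : q ≠ a) (hqb : q ≠ b) (hnqa : ¬G.Adj q a) (hnqb : ¬G.Adj q b) :
    G.Adj x y := by
  rw [mem_commonNeighbors] at hx hy
  by_contra hnxy
  by_cases hyq : G.Adj y q
  · exact hk23.k23_false hxy hnxy hab hqa.symm hqb.symm hnab (fun h => hnqa h.symm)
      (fun h => hnqb h.symm) hx.1.symm hx.2.symm hxq hy.1.symm hy.2.symm hyq
  · exact hban.banner_false hab hx.1.symm hy.1 hy.2.symm hx.2 hnxy hnab hxq hnqa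
      (fun h => hyq h.symm) hnqb

end

theorem stmt_11_general {V : Type*} (G : SimpleGraph V)
    (hban : _root_.Free banner G) (hk23 : _root_.Free k23 G)
    (v : Fin 5 → V) (hC5 : IsInducedC5 G v)
    (Q : Set V) (hQ : Anticomplete5 G Q v) :
    G.IsClique ({x | (∀ i, G.Adj x (v i)) ∧ ∃ q ∈ Q, G.Adj x q} : Set V) := by
  rintro x ⟨hx, q, hqQ, hxq⟩ y ⟨hy, -⟩ hxy
  have hv02 : v 0 ≠ v 2 := hC5.1.ne (by decide)
  have hnv02 : ¬G.Adj (v 0) (v 2) := by rw [hC5.2]; decide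
  have hqv : ∀ i, q ≠ v i := fun i h => hQ.1 i (h ▸ hqQ)
  exact G.adj_of_mem_commonNeighbors hban hk23 hv02 hnv02 ⟨(hx 0).symm, (hx 2).symm⟩
    ⟨(hy 0).symm, (hy 2).symm⟩ hxy hxq (hqv 0) (hqv 2) (hQ.2 q hqQ 0) (hQ.2 q hqQ 2)

theorem stmt_11 {V : Type*} (G : SimpleGraph V)
    (hban : _root_.Free banner G) (hk23 : _root_.Free k23 G)
    (v : Fin 5 → V) (hC5 : IsInducedC5 G v)
    (Q : Set V) (hQconn : (G.induce Q).Connected) (hQ : Anticomplete5 G Q v) :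
    G.IsClique ({x | (∀ i, G.Adj x (v i)) ∧ ∃ q ∈ Q, G.Adj x q} : Set V) :=
  stmt_11_general G hban hk23 v hC5 Q hQ
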